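/- For the symmetric noncompliance matrix Π(p) = [[1−p, p],[p, 1−p]] with p ∈ [0, 1/2) and any μ ∈ (0,1)² with μ₁ > μ₂, the coefficient f(μ'₁, μ'₂) of the Thompson sampling regret bound applied to μ' = Π(p)·μ is nondecreasing in p on [0, 1/2): if 0 ≤ p ≤ q < 1/2 then f((Π(p)μ)₁, (Π(p)μ)₂) ≤ f((Π(q)μ)₁, (Π(q)μ)₂). -/

import Mathlib

noncomputable def binKL (a b : ℝ) : ℝ :=
  a * Real.log (a / b) + (1 - a) * Real.log ((1 - a) / (1 - b))

noncomputable def f (a b : ℝ) : ℝ := (a - b) / binKL b a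

/-!
Since `binKL b b = 0`, `f a b` is the reciprocal of the secant slope of `binKL b ·` between `b`
and `a`, and also of minus the secant slope of `binKL · a` between `a` and `b`. Both functions are
convex on `(0, 1)` (negative logarithms, resp. negative binary entropy, plus affine terms) and
positive off the diagonal (Gibbs), so monotonicity of secant slopes makes `f` antitone in `a` and
monotone in `b`. Increasing `p` lowers `(Π(p)μ)₁` and raises `(Π(p)μ)₂`, keeping them ordered.
-/

open Real Set

lemma binKL_self (a : ℝ) : binKL a a = 0 := by
  simp [binKL]

lemma log_div_rev (x y : ℝ) : log (x / y) = -log (y / x) := by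
  rw [← log_inv, inv_div]

lemma binKL_pos {a b : ℝ} (ha : a ∈ Ioo (0 : ℝ) 1) (hb : b ∈ Ioo (0 : ℝ) 1) (hab : a ≠ b) :
    0 < binKL a b := by
  obtain ⟨ha0, ha1⟩ := ha
  obtain ⟨hb0, hb1⟩ := hb
  have hlt : a * log (b / a) < a * (b / a - 1) := mul_lt_mul_of_pos_left
    (log_lt_sub_one_of_pos (by positivity) (by rwa [ne_eq, div_eq_one_iff_eq ha0.ne', eq_comm]))
    ha0
  have hle : (1 - a) * log ((1 - b) / (1 - a)) ≤ (1 - a) * ((1 - b) / (1 - a) - 1) :=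
    mul_le_mul_of_nonneg_left (log_le_sub_one_of_pos (div_pos (by linarith) (by linarith)))
      (by linarith)
  have hsum : a * (b / a - 1) + (1 - a) * ((1 - b) / (1 - a) - 1) = 0 := by
    field_simp; ring
  rw [binKL, log_div_rev a, log_div_rev (1 - a)]
  linarith

lemma convexOn_neg_log_one_sub : ConvexOn ℝ (Iio 1) fun x : ℝ => -log (1 - x) := by
  have h := strictConcaveOn_log_Ioi.neg.convexOn.comp_affineMap
    (AffineMap.const ℝ ℝ (1 : ℝ) - AffineMap.id ℝ ℝ)
  convert h using 1 <;> ext x <;> simp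

lemma convexOn_binKL_right {b : ℝ} (hb : b ∈ Ioo (0 : ℝ) 1) : ConvexOn ℝ (Ioo 0 1) (binKL b) := by
  obtain ⟨hb0, hb1⟩ := hb
  have hlog : ConvexOn ℝ (Ioo 0 1) fun x : ℝ => -log x :=
    strictConcaveOn_log_Ioi.neg.convexOn.subset Ioo_subset_Ioi_self (convex_Ioo 0 1)
  have hlog' : ConvexOn ℝ (Ioo 0 1) fun x : ℝ => -log (1 - x) :=
    convexOn_neg_log_one_sub.subset Ioo_subset_Iio_self (convex_Ioo 0 1)
  refine ((hlog.smul hb0.le).add (hlog'.smul (sub_nonneg.2 hb1.le))).add_const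
    (b * log b + (1 - b) * log (1 - b)) |>.congr fun x hx => ?_
  have : 0 < 1 - x := sub_pos.2 hx.2
  simp only [binKL, smul_eq_mul, Pi.add_apply]
  rw [log_div hb0.ne' hx.1.ne', log_div (by linarith) this.ne']
  ring

lemma convexOn_binKL_left {a : ℝ} (ha : a ∈ Ioo (0 : ℝ) 1) :
    ConvexOn ℝ (Ioo 0 1) fun y => binKL y a := by
  obtain ⟨ha0, ha1⟩ := ha
  have hent : ConvexOn ℝ (Ioo 0 1) fun y => -binEntropy y :=
    strictConcave_binEntropy.neg.convexOn.subset Ioo_subset_Icc_self (convex_Ioo 0 1)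
  refine (hent.add ((LinearMap.mulRight ℝ (log (1 - a) - log a)).convexOn (convex_Ioo 0 1))).add_const
    (-log (1 - a)) |>.congr fun y hy => ?_
  have : 0 < 1 - y := sub_pos.2 hy.2
  simp only [binKL, binEntropy, Pi.add_apply, LinearMap.mulRight_apply, log_inv]
  rw [log_div hy.1.ne' ha0.ne', log_div this.ne' (by linarith)]
  ring

lemma f_eq_inv_slope (a b : ℝ) : f a b = (binKL b a / (a - b))⁻¹ := by
  rw [f, inv_div]

lemma f_antitoneOn_left {b : ℝ} (hb : b ∈ Ioo (0 : ℝ) 1) :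
    AntitoneOn (fun a => f a b) (Ioo b 1) := by
  intro x hx y hy hxy
  have hx01 : x ∈ Ioo (0 : ℝ) 1 := ⟨hb.1.trans hx.1, hx.2⟩
  have hy01 : y ∈ Ioo (0 : ℝ) 1 := ⟨hb.1.trans hy.1, hy.2⟩
  have hslope := (convexOn_binKL_right hb).secant_mono hb hx01 hy01 hx.1.ne' hy.1.ne' hxy
  rw [binKL_self, sub_zero, sub_zero] at hslope
  simp only [f_eq_inv_slope]
  exact inv_anti₀ (div_pos (binKL_pos hb hx01 hx.1.ne) (sub_pos.2 hx.1)) hslope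

lemma f_monotoneOn_right {a : ℝ} (ha : a ∈ Ioo (0 : ℝ) 1) :
    MonotoneOn (fun b => f a b) (Ioo 0 a) := by
  intro x hx y hy hxy
  have hx01 : x ∈ Ioo (0 : ℝ) 1 := ⟨hx.1, hx.2.trans ha.2⟩
  have hy01 : y ∈ Ioo (0 : ℝ) 1 := ⟨hy.1, hy.2.trans ha.2⟩
  have hslope := (convexOn_binKL_left ha).secant_mono ha hx01 hy01 hx.2.ne hy.2.ne hxy
  rw [binKL_self, sub_zero, sub_zero, ← neg_sub a x, ← neg_sub a y, div_neg, div_neg,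
    neg_le_neg_iff] at hslope
  simp only [f_eq_inv_slope]
  exact inv_anti₀ (div_pos (binKL_pos hy01 ha hy.2.ne) (sub_pos.2 hy.2)) hslope

/-- For symmetric noncompliance Π(p), the regret-bound coefficient applied to
μ' = Π(p)·μ is nondecreasing in p on [0, 1/2). -/
theorem coeff_monotone_in_p (μ1 μ2 p q : ℝ)
    (h1 : μ1 ∈ Set.Ioo (0:ℝ) 1) (h2 : μ2 ∈ Set.Ioo (0:ℝ) 1) (hμ : μ2 < μ1)
    (hp : 0 ≤ p) (hpq : p ≤ q) (hq : q < 1/2) :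
    f ((1 - p) * μ1 + p * μ2) (p * μ1 + (1 - p) * μ2)
      ≤ f ((1 - q) * μ1 + q * μ2) (q * μ1 + (1 - q) * μ2) := by
  obtain ⟨hμ1, hμ1'⟩ := h1
  obtain ⟨hμ2, hμ2'⟩ := h2
  have hbp : 0 < p * μ1 + (1 - p) * μ2 := by nlinarith
  have hbpq : p * μ1 + (1 - p) * μ2 ≤ q * μ1 + (1 - q) * μ2 := by nlinarith
  have hbaq : q * μ1 + (1 - q) * μ2 < (1 - q) * μ1 + q * μ2 := by nlinarith
  have haqp : (1 - q) * μ1 + q * μ2 ≤ (1 - p) * μ1 + p * μ2 := by nlinarith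
  have hap : (1 - p) * μ1 + p * μ2 < 1 := by nlinarith
  calc f ((1 - p) * μ1 + p * μ2) (p * μ1 + (1 - p) * μ2)
      ≤ f ((1 - q) * μ1 + q * μ2) (p * μ1 + (1 - p) * μ2) :=
        f_antitoneOn_left ⟨hbp, by linarith⟩ ⟨by linarith, by linarith⟩ ⟨by linarith, hap⟩ haqp
    _ ≤ f ((1 - q) * μ1 + q * μ2) (q * μ1 + (1 - q) * μ2) :=
        f_monotoneOn_right ⟨by linarith, by linarith⟩ ⟨hbp, by linarith⟩ ⟨by linarith, hbaq⟩ hbpq
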